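/- Let A₁, A₂ be bounded operators with closed range on a complex Hilbert space H and u a unit vector. Then |⟨(A₁+A₂)u,u⟩| ≤ (1/√2) · |⟨(|A₁|² + |A₂|² + i(A₁A₁† + A₂A₂†)) u, u⟩|. -/

import Mathlib

open scoped InnerProductSpace
open ContinuousLinearMap

lemma aux_num (a₁ b₁ a₂ b₂ : ℝ) (ha₁ : 0 ≤ a₁) (hb₁ : 0 ≤ b₁) (ha₂ : 0 ≤ a₂)
    (hb₂ : 0 ≤ b₂) :
    a₁*b₁ + a₂*b₂ ≤ (1 / Real.sqrt 2) * Real.sqrt ((a₁^2+a₂^2)^2 + (b₁^2+b₂^2)^2) := by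
  have hS : (0:ℝ) ≤ (a₁^2+a₂^2)^2 + (b₁^2+b₂^2)^2 := by positivity
  have h2 : (1 / Real.sqrt 2) * Real.sqrt ((a₁^2+a₂^2)^2 + (b₁^2+b₂^2)^2)
      = Real.sqrt (((a₁^2+a₂^2)^2 + (b₁^2+b₂^2)^2) / 2) := by
    rw [Real.sqrt_div hS]
    field_simp
  rw [h2]
  rw [Real.le_sqrt (by positivity) (by positivity)]
  rw [le_div_iff₀ (by norm_num)]
  nlinarith [sq_nonneg (a₁*b₂ - a₂*b₁), sq_nonneg (a₁^2+a₂^2 - (b₁^2+b₂^2)),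
    sq_nonneg (a₁*b₁ + a₂*b₂)]

theorem stmt_13 {H : Type*} [NormedAddCommGroup H] [InnerProductSpace ℂ H]
    [CompleteSpace H] (A₁ Ad₁ A₂ Ad₂ : H →L[ℂ] H)
    (hran₁ : IsClosed (Set.range A₁)) (hran₂ : IsClosed (Set.range A₂))
    (h11 : A₁ * Ad₁ * A₁ = A₁) (h12 : Ad₁ * A₁ * Ad₁ = Ad₁)
    (h13 : adjoint (A₁ * Ad₁) = A₁ * Ad₁) (h14 : adjoint (Ad₁ * A₁) = Ad₁ * A₁)
    (h21 : A₂ * Ad₂ * A₂ = A₂) (h22 : Ad₂ * A₂ * Ad₂ = Ad₂)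
    (h23 : adjoint (A₂ * Ad₂) = A₂ * Ad₂) (h24 : adjoint (Ad₂ * A₂) = Ad₂ * A₂)
    (u : H) (hu : ‖u‖ = 1) :
    ‖⟪(A₁ + A₂) u, u⟫_ℂ‖ ≤
      (1 / Real.sqrt 2) *
        ‖⟪(adjoint A₁ * A₁ + adjoint A₂ * A₂ +
            Complex.I • (A₁ * Ad₁ + A₂ * Ad₂)) u, u⟫_ℂ‖ := by
  set P₁ := A₁ * Ad₁ with hP₁
  set P₂ := A₂ * Ad₂ with hP₂
  -- idempotency
  have hP₁idem : P₁ * P₁ = P₁ := by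
    rw [hP₁]; rw [show A₁ * Ad₁ * (A₁ * Ad₁) = (A₁ * Ad₁ * A₁) * Ad₁ from (mul_assoc _ _ _).symm, h11]
  have hP₂idem : P₂ * P₂ = P₂ := by
    rw [hP₂]; rw [show A₂ * Ad₂ * (A₂ * Ad₂) = (A₂ * Ad₂ * A₂) * Ad₂ from (mul_assoc _ _ _).symm, h21]
  -- P_j A_j = A_j
  have hPA₁ : P₁ * A₁ = A₁ := by rw [hP₁]; exact h11
  have hPA₂ : P₂ * A₂ = A₂ := by rw [hP₂]; exact h21
  -- inner products with P
  have innerP : ∀ (P : H →L[ℂ] H), adjoint P = P → P * P = P →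
      ⟪P u, u⟫_ℂ = (‖P u‖ : ℂ)^2 := by
    intro P hs hi
    have : ⟪P u, u⟫_ℂ = ⟪P (P u), u⟫_ℂ := by
      conv_lhs => rw [← hi]
      rfl
    rw [this, ← hs, adjoint_inner_left, hs, inner_self_eq_norm_sq_to_K]
    norm_cast
  have hP₁inner : ⟪P₁ u, u⟫_ℂ = (‖P₁ u‖ : ℂ)^2 := innerP P₁ h13 hP₁idem
  have hP₂inner : ⟪P₂ u, u⟫_ℂ = (‖P₂ u‖ : ℂ)^2 := innerP P₂ h23 hP₂idem
  -- LHS bounds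
  have bound : ∀ (A Ad : H →L[ℂ] H), adjoint (A * Ad) = A * Ad → (A * Ad) * A = A →
      ‖⟪A u, u⟫_ℂ‖ ≤ ‖A u‖ * ‖(A * Ad) u‖ := by
    intro A Ad hs hPA
    have h1 : ⟪A u, u⟫_ℂ = ⟪A u, (A * Ad) u⟫_ℂ := by
      conv_lhs => rw [show A u = (A * Ad) (A u) by rw [← ContinuousLinearMap.comp_apply,
        ← ContinuousLinearMap.mul_def, hPA]]
      rw [← hs, adjoint_inner_left, hs]
    rw [h1]
    exact norm_inner_le_norm _ _
  have hb₁ : ‖⟪A₁ u, u⟫_ℂ‖ ≤ ‖A₁ u‖ * ‖P₁ u‖ := bound A₁ Ad₁ h13 (by rw [mul_assoc] at h11 ⊢; exact h11)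
  have hb₂ : ‖⟪A₂ u, u⟫_ℂ‖ ≤ ‖A₂ u‖ * ‖P₂ u‖ := bound A₂ Ad₂ h23 (by rw [mul_assoc] at h21 ⊢; exact h21)
  -- RHS value
  set x : ℝ := ‖A₁ u‖^2 + ‖A₂ u‖^2 with hx
  set y : ℝ := ‖P₁ u‖^2 + ‖P₂ u‖^2 with hy
  have hc : ⟪(adjoint A₁ * A₁ + adjoint A₂ * A₂ + Complex.I • (P₁ + P₂)) u, u⟫_ℂ
      = (x : ℂ) - Complex.I * (y : ℂ) := by
    simp only [ContinuousLinearMap.add_apply, ContinuousLinearMap.smul_apply,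
      ContinuousLinearMap.mul_apply, inner_add_left, inner_smul_left,
      adjoint_inner_left, hP₁inner, hP₂inner]
    rw [inner_self_eq_norm_sq_to_K, inner_self_eq_norm_sq_to_K]
    simp [hx, hy, Complex.conj_I]
    push_cast
    ring
  have hnc : ‖⟪(adjoint A₁ * A₁ + adjoint A₂ * A₂ + Complex.I • (P₁ + P₂)) u, u⟫_ℂ‖
      = Real.sqrt (x^2 + y^2) := by
    rw [hc]
    rw [Complex.norm_def, Complex.normSq_apply]
    simp [Complex.sub_re, Complex.sub_im]
    ring_nf
  calc ‖⟪(A₁ + A₂) u, u⟫_ℂ‖ ≤ ‖⟪A₁ u, u⟫_ℂ‖ + ‖⟪A₂ u, u⟫_ℂ‖ := by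
        rw [ContinuousLinearMap.add_apply, inner_add_left]; exact norm_add_le _ _
    _ ≤ ‖A₁ u‖ * ‖P₁ u‖ + ‖A₂ u‖ * ‖P₂ u‖ := add_le_add hb₁ hb₂
    _ ≤ (1 / Real.sqrt 2) * Real.sqrt ((‖A₁ u‖^2 + ‖A₂ u‖^2)^2 + (‖P₁ u‖^2 + ‖P₂ u‖^2)^2) :=
        aux_num _ _ _ _ (norm_nonneg _) (norm_nonneg _) (norm_nonneg _) (norm_nonneg _)
    _ = (1 / Real.sqrt 2) *
        ‖⟪(adjoint A₁ * A₁ + adjoint A₂ * A₂ + Complex.I • (P₁ + P₂)) u, u⟫_ℂ‖ := by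
        rw [hnc]
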